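/- With notation as in Lemma 3.3, for J ⊆ {1,…,d}: if {i,j} ⊆ J with i < j then ∂g_J/∂x_{ij} = 2 ∂²g_J/∂y_i∂y_j; if i ∈ J then ∂g_J/∂x_{ii} = ∂²g_J/∂y_i²; and if {i,j} ⊄ J then ∂g_J/∂x_{ij} = 0. -/

import Mathlib

/-! The exponent of `g_J` is `Q t + ⟨y, t⟩` with `Q` the quadratic form of `x_J`. Moving `x` along
`s • E` adds `s • tᵀ E_J t` to it and moving `y` adds linear terms, so differentiating under the
integral sign brings down `tᵀ E_J t` in `x`, and `t_i t_j` after two derivatives in `y`. For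
`E = E_ij + E_ji` the form `tᵀ E_J t` is `2 t_i t_j`, for `E = E_ii` it is `t_i²`, and it vanishes
when `{i, j} ⊄ J`. Differentiation under the integral is legitimate because positive definiteness
of `-x_J` gives `Q t ≤ -c ∑ t_i²`: all integrands are then dominated by
`exp (B ∑ |t_i| - c' ∑ t_i²)`, a product of integrable one-dimensional functions. -/

open MeasureTheory Real Matrix Filter

/-- The function g_J(x,y): the integral over the positive orthant in the variables
(t_j)_{j ∈ J} of exp(∑_{i,j∈J} x_{ij} t_i t_j + ∑_{k∈J} y_k t_k); g_∅ = 1. -/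
noncomputable def gJ (d : ℕ) (J : Finset (Fin d)) (x : Matrix (Fin d) (Fin d) ℝ)
    (y : Fin d → ℝ) : ℝ :=
  ∫ t : {a // a ∈ J} → ℝ in {t | ∀ j, 0 ≤ t j},
    Real.exp (∑ i, ∑ j, x i.1 j.1 * t i * t j + ∑ k, y k.1 * t k)

section GaussianDomination

variable {ι : Type*} [Fintype ι]

lemma integrable_exp_mul_abs_sub_mul_sq (B : ℝ) {c : ℝ} (hc : 0 < c) :
    Integrable fun u : ℝ => exp (B * |u| - c * u ^ 2) := by
  refine ((integrable_exp_neg_mul_sq (half_pos hc)).const_mul (exp (B ^ 2 / (2 * c)))).mono'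
    (by fun_prop : Continuous _).aestronglyMeasurable (ae_of_all _ fun u => ?_)
  rw [norm_of_nonneg (exp_pos _).le, ← exp_add, exp_le_exp, ← sq_abs u]
  have hsquare : B ^ 2 / (2 * c) + -(c / 2) * |u| ^ 2 - (B * |u| - c * |u| ^ 2)
      = c / 2 * (|u| - B / c) ^ 2 := by
    field_simp
    ring
  linarith [mul_nonneg (half_pos hc).le (sq_nonneg (|u| - B / c))]

lemma integrable_exp_mul_sum_abs_sub_mul_sum_sq (B : ℝ) {c : ℝ} (hc : 0 < c) :
    Integrable fun t : ι → ℝ => exp (B * ∑ i, |t i| - c * ∑ i, t i ^ 2) := by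
  refine (Integrable.fintype_prod (μ := fun _ : ι => volume)
    fun _ : ι => integrable_exp_mul_abs_sub_mul_sq B hc).congr (ae_of_all _ fun t => ?_)
  dsimp only
  rw [← exp_sum, Finset.mul_sum, Finset.mul_sum, ← Finset.sum_sub_distrib]

lemma abs_mul_le_sum_sq (t : ι → ℝ) (a b : ι) : |t a * t b| ≤ ∑ i, t i ^ 2 := by
  have ha := Finset.single_le_sum (fun i _ => sq_nonneg (t i)) (Finset.mem_univ a)
  have hb := Finset.single_le_sum (fun i _ => sq_nonneg (t i)) (Finset.mem_univ b)
  rw [abs_mul]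
  nlinarith [sq_nonneg (|t a| - |t b|), sq_abs (t a), sq_abs (t b)]

lemma abs_dotProduct_mulVec_le (M : Matrix ι ι ℝ) (t : ι → ℝ) :
    |t ⬝ᵥ M *ᵥ t| ≤ (∑ i, ∑ j, |M i j|) * ∑ i, t i ^ 2 := by
  have hexpand : t ⬝ᵥ M *ᵥ t = ∑ i, ∑ j, M i j * (t i * t j) := by
    simp only [dotProduct, mulVec, Finset.mul_sum]
    exact Finset.sum_congr rfl fun i _ => Finset.sum_congr rfl fun j _ => by ring
  calc |t ⬝ᵥ M *ᵥ t| ≤ ∑ i, ∑ j, |M i j| * ∑ k, t k ^ 2 := by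
        rw [hexpand]
        refine (Finset.abs_sum_le_sum_abs _ _).trans (Finset.sum_le_sum fun i _ => ?_)
        refine (Finset.abs_sum_le_sum_abs _ _).trans (Finset.sum_le_sum fun j _ => ?_)
        rw [abs_mul]
        exact mul_le_mul_of_nonneg_left (abs_mul_le_sum_sq t i j) (abs_nonneg _)
    _ = (∑ i, ∑ j, |M i j|) * ∑ k, t k ^ 2 := by simp only [Finset.sum_mul]

lemma sum_sq_pos_of_ne_zero {t : ι → ℝ} (ht : t ≠ 0) : 0 < ∑ i, t i ^ 2 := by
  obtain ⟨i, hi⟩ := Function.ne_iff.mp ht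
  exact Finset.sum_pos' (fun i _ => sq_nonneg _) ⟨i, Finset.mem_univ _, sq_pos_of_ne_zero hi⟩

lemma Matrix.PosDef.exists_pos_mul_sum_sq_le {M : Matrix ι ι ℝ} (hM : M.PosDef) :
    ∃ c > 0, ∀ t : ι → ℝ, c * ∑ i, t i ^ 2 ≤ t ⬝ᵥ M *ᵥ t := by
  rcases isEmpty_or_nonempty ι with hι | hι
  · exact ⟨1, one_pos, fun t => by simp⟩
  -- minimise the Rayleigh quotient over the (compact) unit sphere of the sup norm
  let R : (ι → ℝ) → ℝ := fun t => t ⬝ᵥ M *ᵥ t / ∑ i, t i ^ 2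
  have hR : ContinuousOn R (Metric.sphere 0 1) :=
    ContinuousOn.div (by fun_prop) (by fun_prop) fun t ht =>
      (sum_sq_pos_of_ne_zero (Metric.ne_of_mem_sphere ht one_ne_zero)).ne'
  obtain ⟨u, hu, hmin⟩ := (isCompact_sphere (0 : ι → ℝ) 1).exists_isMinOn
    (NormedSpace.sphere_nonempty.mpr zero_le_one) hR
  have hu0 : u ≠ 0 := Metric.ne_of_mem_sphere hu one_ne_zero
  refine ⟨R u, div_pos (by simpa using hM.dotProduct_mulVec_pos hu0)
    (sum_sq_pos_of_ne_zero hu0), fun t => ?_⟩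
  rcases eq_or_ne t 0 with rfl | ht
  · simp
  have hscale : R (‖t‖⁻¹ • t) = R t := by
    simp only [R, mulVec_smul, dotProduct_smul, smul_dotProduct, Pi.smul_apply, smul_eq_mul,
      mul_pow, ← Finset.mul_sum]
    rw [← mul_assoc, ← sq]
    exact mul_div_mul_left _ _ (by positivity)
  have hmem : ‖t‖⁻¹ • t ∈ Metric.sphere (0 : ι → ℝ) 1 := by
    simp [norm_smul, ht]
  rw [← le_div_iff₀ (sum_sq_pos_of_ne_zero ht)]
  change R u ≤ R t
  rw [← hscale]
  exact hmin hmem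

end GaussianDomination

section DifferentiationUnderIntegral

variable {ι κ : Type*} [Fintype ι]

lemma abs_sum_comp_mul_le [Fintype κ] (e : ι → κ) (y : κ → ℝ) (t : ι → ℝ) :
    |∑ i, y (e i) * t i| ≤ ‖y‖ * ∑ i, |t i| := by
  rw [Finset.mul_sum]
  refine (Finset.abs_sum_le_sum_abs _ _).trans (Finset.sum_le_sum fun i _ => ?_)
  rw [abs_mul, ← Real.norm_eq_abs (y (e i))]
  exact mul_le_mul_of_nonneg_right (norm_le_pi_norm y (e i)) (abs_nonneg _)

lemma abs_mul_exp_add_mul_le {φ p : (ι → ℝ) → ℝ} {B c M s : ℝ} (hc : 0 < c)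
    (hφB : ∀ t, φ t ≤ B * ∑ i, |t i| - c * ∑ i, t i ^ 2)
    (hpM : ∀ t, |p t| ≤ M * ∑ i, t i ^ 2) (hs : |s| * |M| ≤ c / 2) (t : ι → ℝ) :
    |p t * exp (φ t + s * p t)| ≤ |M| * (4 / c) * exp (B * ∑ i, |t i| - c / 4 * ∑ i, t i ^ 2) := by
  set q := ∑ i, t i ^ 2
  have hpq : |p t| ≤ |M| * q := (hpM t).trans (by gcongr; exact le_abs_self M)
  have hsp : s * p t ≤ c / 2 * q := calc
    s * p t ≤ |s| * |p t| := by rw [← abs_mul]; exact le_abs_self _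
    _ ≤ |s| * (|M| * q) := by gcongr
    _ ≤ c / 2 * q := by rw [← mul_assoc]; gcongr
  -- the polynomial factor `q` is absorbed by a quarter of the Gaussian decay
  have hq_exp : q ≤ 4 / c * exp (c / 4 * q) := calc
    q = 4 / c * (c / 4 * q) := by field_simp
    _ ≤ 4 / c * exp (c / 4 * q) := by gcongr; linarith [add_one_le_exp (c / 4 * q)]
  rw [abs_mul, abs_of_pos (exp_pos _)]
  calc |p t| * exp (φ t + s * p t)
      ≤ |M| * q * exp (B * ∑ i, |t i| - c / 2 * q) := by
        gcongr
        linarith [hφB t]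
    _ ≤ |M| * (4 / c * exp (c / 4 * q)) * exp (B * ∑ i, |t i| - c / 2 * q) := by gcongr
    _ = |M| * (4 / c) * exp (B * ∑ i, |t i| - c / 4 * q) := by
        rw [mul_assoc (|M|), mul_assoc (4 / c), ← exp_add]
        ring_nf

lemma hasDerivAt_integral_exp_add_mul (S : Set (ι → ℝ)) {φ p : (ι → ℝ) → ℝ}
    (hφ : Continuous φ) (hp : Continuous p) {B c M : ℝ} (hc : 0 < c)
    (hφB : ∀ t, φ t ≤ B * ∑ i, |t i| - c * ∑ i, t i ^ 2)
    (hpM : ∀ t, |p t| ≤ M * ∑ i, t i ^ 2) :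
    HasDerivAt (fun s : ℝ => ∫ t in S, exp (φ t + s * p t)) (∫ t in S, p t * exp (φ t)) 0 := by
  set ε := c / (2 * (|M| + 1))
  have hε : 0 < ε := by positivity
  have hbound : ∀ t, ∀ s ∈ Metric.ball (0 : ℝ) ε, ‖p t * exp (φ t + s * p t)‖
      ≤ |M| * (4 / c) * exp (B * ∑ i, |t i| - c / 4 * ∑ i, t i ^ 2) := fun t s hs => by
    refine abs_mul_exp_add_mul_le hc hφB hpM ?_ t
    have hs' : |s| ≤ ε := by simpa using (Metric.mem_ball.mp hs).le
    calc |s| * |M| ≤ ε * (|M| + 1) := by gcongr; linarith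
      _ = c / 2 := by simp only [ε]; field_simp
  have hF₀ : Integrable (fun t => exp (φ t + 0 * p t)) (volume.restrict S) := by
    refine (integrable_exp_mul_sum_abs_sub_mul_sum_sq B hc).restrict.mono'
      (by fun_prop : Continuous _).aestronglyMeasurable (ae_of_all _ fun t => ?_)
    rw [norm_of_nonneg (exp_pos _).le, exp_le_exp, zero_mul, add_zero]
    exact hφB t
  have hderiv := hasDerivAt_integral_of_dominated_loc_of_deriv_le (μ := volume.restrict S)
    (F := fun s t => exp (φ t + s * p t)) (F' := fun s t => p t * exp (φ t + s * p t))
    (Metric.ball_mem_nhds 0 hε)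
    (Eventually.of_forall fun s => (by fun_prop : Continuous _).aestronglyMeasurable) hF₀
    (by fun_prop : Continuous _).aestronglyMeasurable (ae_of_all _ hbound)
    (((integrable_exp_mul_sum_abs_sub_mul_sum_sq B (by positivity)).const_mul _).restrict)
    (ae_of_all _ fun t s _ => by
      simpa [mul_comm] using ((hasDerivAt_mul_const (p t)).const_add (φ t)).exp)
  simpa using hderiv.2

def weightedEval (e : ι → κ) (t : ι → ℝ) : (κ → ℝ) →L[ℝ] ℝ :=
  ∑ i, t i • ContinuousLinearMap.proj (e i)

lemma weightedEval_apply (e : ι → κ) (t : ι → ℝ) (y : κ → ℝ) :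
    weightedEval e t y = ∑ i, y (e i) * t i := by
  simp [weightedEval, mul_comm]

lemma norm_weightedEval_le [Fintype κ] (e : ι → κ) (t : ι → ℝ) : ‖weightedEval e t‖ ≤ ∑ i, |t i| :=
  (weightedEval e t).opNorm_le_bound (by positivity) fun y => by
    rw [weightedEval_apply, Real.norm_eq_abs, mul_comm]
    exact abs_sum_comp_mul_le e y t

lemma continuous_weightedEval (e : ι → κ) : Continuous (weightedEval e) := by
  unfold weightedEval
  fun_prop

lemma abs_mul_exp_add_sum_le [Fintype κ] (e : ι → κ) {w φ : (ι → ℝ) → ℝ} {K B c R : ℝ}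
    (hwK : ∀ t, |w t| ≤ exp (K * ∑ i, |t i|))
    (hφB : ∀ t, φ t ≤ B * ∑ i, |t i| - c * ∑ i, t i ^ 2) {y : κ → ℝ} (hy : ‖y‖ ≤ R)
    (t : ι → ℝ) :
    |w t * exp (φ t + ∑ i, y (e i) * t i)|
      ≤ exp ((K + B + R) * ∑ i, |t i| - c * ∑ i, t i ^ 2) := by
  have hlin : ∑ i, y (e i) * t i ≤ R * ∑ i, |t i| :=
    (le_abs_self _).trans ((abs_sum_comp_mul_le e y t).trans (by gcongr))
  rw [abs_mul, abs_of_pos (exp_pos _)]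
  calc |w t| * exp (φ t + ∑ i, y (e i) * t i)
      ≤ exp (K * ∑ i, |t i|) * exp (B * ∑ i, |t i| - c * ∑ i, t i ^ 2 + R * ∑ i, |t i|) := by
        gcongr
        · exact hwK t
        · exact hφB t
    _ = _ := by rw [← exp_add]; ring_nf

lemma fderiv_integral_mul_exp_add_sum_apply [Fintype κ] (S : Set (ι → ℝ)) (e : ι → κ)
    {w φ : (ι → ℝ) → ℝ} (hw : Continuous w) (hφ : Continuous φ) {K B c : ℝ} (hc : 0 < c)
    (hwK : ∀ t, |w t| ≤ exp (K * ∑ i, |t i|))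
    (hφB : ∀ t, φ t ≤ B * ∑ i, |t i| - c * ∑ i, t i ^ 2) (y₀ v : κ → ℝ) :
    fderiv ℝ (fun y : κ → ℝ => ∫ t in S, w t * exp (φ t + ∑ i, y (e i) * t i)) y₀ v
      = ∫ t in S, (∑ i, v (e i) * t i) * (w t * exp (φ t + ∑ i, y₀ (e i) * t i)) := by
  have hFcont : ∀ y : κ → ℝ, Continuous fun t => w t * exp (φ t + ∑ i, y (e i) * t i) :=
    fun y => by fun_prop
  set F' := fun (y : κ → ℝ) t => (w t * exp (φ t + ∑ i, y (e i) * t i)) • weightedEval e t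
  set bound := fun t : ι → ℝ => exp ((K + B + (‖y₀‖ + 1) + 1) * ∑ i, |t i| - c * ∑ i, t i ^ 2)
  have hbound : ∀ t, ∀ y ∈ Metric.ball y₀ 1, ‖F' y t‖ ≤ bound t := by
    intro t y hy
    have hy' : ‖y‖ ≤ ‖y₀‖ + 1 := by
      linarith [norm_le_norm_add_norm_sub' y y₀, (mem_ball_iff_norm.mp hy).le]
    have hL : ‖weightedEval e t‖ ≤ exp (∑ i, |t i|) :=
      (norm_weightedEval_le e t).trans (by linarith [add_one_le_exp (∑ i, |t i|)])
    rw [norm_smul, Real.norm_eq_abs]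
    calc _ ≤ exp ((K + B + (‖y₀‖ + 1)) * ∑ i, |t i| - c * ∑ i, t i ^ 2) * exp (∑ i, |t i|) :=
          mul_le_mul (abs_mul_exp_add_sum_le e hwK hφB hy' t) hL (norm_nonneg _) (exp_pos _).le
      _ = bound t := by simp only [bound, ← exp_add]; ring_nf
  have hbound_int : Integrable bound (volume.restrict S) :=
    (integrable_exp_mul_sum_abs_sub_mul_sum_sq _ hc).restrict
  have hF'_meas : AEStronglyMeasurable (F' y₀) (volume.restrict S) :=
    ((hFcont y₀).smul (continuous_weightedEval e)).aestronglyMeasurable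
  have hF'_int : Integrable (F' y₀) (volume.restrict S) :=
    hbound_int.mono' hF'_meas (ae_of_all _ fun t => hbound t y₀ (Metric.mem_ball_self one_pos))
  have hF_int : Integrable (fun t => w t * exp (φ t + ∑ i, y₀ (e i) * t i)) (volume.restrict S) :=
    (integrable_exp_mul_sum_abs_sub_mul_sum_sq _ hc).restrict.mono' (hFcont y₀).aestronglyMeasurable
      (ae_of_all _ fun t => abs_mul_exp_add_sum_le e hwK hφB le_rfl t)
  have hdiff : ∀ t y, HasFDerivAt (fun y : κ → ℝ => w t * exp (φ t + ∑ i, y (e i) * t i))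
      (F' y t) y := fun t y => by
    have hlin : HasFDerivAt (fun y : κ → ℝ => ∑ i, y (e i) * t i) (weightedEval e t) y := by
      rw [show (fun y : κ → ℝ => ∑ i, y (e i) * t i) = weightedEval e t from
        funext fun y => (weightedEval_apply e t y).symm]
      exact (weightedEval e t).hasFDerivAt
    simpa only [F', smul_smul] using ((hlin.const_add (φ t)).exp).const_mul (w t)
  rw [(hasFDerivAt_integral_of_dominated_of_fderiv_le (Metric.ball_mem_nhds y₀ one_pos)
    (Eventually.of_forall fun y => (hFcont y).aestronglyMeasurable) hF_int hF'_meas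
    (ae_of_all _ hbound) hbound_int (ae_of_all _ fun t y _ => hdiff t y)).fderiv,
    ContinuousLinearMap.integral_apply hF'_int]
  simp only [F', _root_.smul_apply, weightedEval_apply, smul_eq_mul, mul_comm]

end DifferentiationUnderIntegral

section Submatrix

variable {α : Type*} [DecidableEq α] {J : Finset α}

lemma dotProduct_submatrix_val_single_mulVec {i j : α} (hi : i ∈ J)
    (hj : j ∈ J) (c : ℝ) (t : {a // a ∈ J} → ℝ) :
    t ⬝ᵥ (single i j c).submatrix Subtype.val Subtype.val *ᵥ t = c * t ⟨i, hi⟩ * t ⟨j, hj⟩ := by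
  have hsub : (single i j c).submatrix (Subtype.val : {a // a ∈ J} → α) Subtype.val
      = single ⟨i, hi⟩ ⟨j, hj⟩ c := by
    ext a b
    simp [single_apply, Subtype.ext_iff, eq_comm]
  simp [hsub, single_mulVec_eq]
  ring

lemma submatrix_val_single_of_not_mem {i j : α} (hij : ¬(i ∈ J ∧ j ∈ J)) (c : ℝ) :
    (single i j c).submatrix (Subtype.val : {a // a ∈ J} → α) Subtype.val
      = (0 : Matrix {a // a ∈ J} {a // a ∈ J} ℝ) := by
  ext a b
  simp only [submatrix_apply, single_apply, Matrix.zero_apply, ite_eq_right_iff, and_imp]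
  rintro rfl rfl
  exact absurd ⟨a.2, b.2⟩ hij

lemma sum_single_val_mul {j : α} (hj : j ∈ J) (t : {a // a ∈ J} → ℝ) :
    ∑ k : {a // a ∈ J}, (Pi.single j 1 : α → ℝ) k * t k = t ⟨j, hj⟩ := by
  rw [Finset.sum_eq_single ⟨j, hj⟩ (fun k _ hk => by simp [Subtype.ext_iff.not.mp hk]) (by simp)]
  simp

end Submatrix

section gJ

variable {d : ℕ} {J : Finset (Fin d)}

lemma gJ_eq_integral (x : Matrix (Fin d) (Fin d) ℝ) (y : Fin d → ℝ) :
    gJ d J x y = ∫ t : {a // a ∈ J} → ℝ in {t | ∀ j, 0 ≤ t j},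
      exp (t ⬝ᵥ x.submatrix Subtype.val Subtype.val *ᵥ t + ∑ k, y k.1 * t k) := by
  unfold gJ
  congr with t
  simp only [dotProduct, mulVec, submatrix_apply, Finset.mul_sum]
  congr 2
  exact Finset.sum_congr rfl fun i _ => Finset.sum_congr rfl fun j _ => by ring

lemma exists_quadForm_submatrix_le_of_posDef {x : Matrix (Fin d) (Fin d) ℝ}
    (hx : (Matrix.of fun i j : {a // a ∈ J} => -x i.1 j.1).PosDef) :
    ∃ c > 0, ∀ t : {a // a ∈ J} → ℝ,
      t ⬝ᵥ x.submatrix Subtype.val Subtype.val *ᵥ t ≤ -c * ∑ i, t i ^ 2 := by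
  obtain ⟨c, hc, hle⟩ := hx.exists_pos_mul_sum_sq_le
  refine ⟨c, hc, fun t => ?_⟩
  have hneg : (Matrix.of fun i j : {a // a ∈ J} => -x i.1 j.1)
      = -x.submatrix Subtype.val Subtype.val := rfl
  have := hle t
  rw [hneg, neg_mulVec, dotProduct_neg] at this
  linarith

theorem hasDerivAt_gJ_add_smul {x : Matrix (Fin d) (Fin d) ℝ}
    (hx : (Matrix.of fun i j : {a // a ∈ J} => -x i.1 j.1).PosDef)
    (E : Matrix (Fin d) (Fin d) ℝ) (y : Fin d → ℝ) :
    HasDerivAt (fun s : ℝ => gJ d J (x + s • E) y)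
      (∫ t : {a // a ∈ J} → ℝ in {t | ∀ j, 0 ≤ t j},
        (t ⬝ᵥ E.submatrix Subtype.val Subtype.val *ᵥ t)
          * exp (t ⬝ᵥ x.submatrix Subtype.val Subtype.val *ᵥ t + ∑ k, y k.1 * t k)) 0 := by
  obtain ⟨c, hc, hQ⟩ := exists_quadForm_submatrix_le_of_posDef hx
  have hφB : ∀ t : {a // a ∈ J} → ℝ,
      t ⬝ᵥ x.submatrix Subtype.val Subtype.val *ᵥ t + ∑ k, y k.1 * t k
        ≤ ‖y‖ * ∑ i, |t i| - c * ∑ i, t i ^ 2 := fun t => by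
    linarith [hQ t, le_of_abs_le (abs_sum_comp_mul_le Subtype.val y t)]
  convert hasDerivAt_integral_exp_add_mul _ (by fun_prop) (by fun_prop) hc hφB
    (abs_dotProduct_mulVec_le (E.submatrix Subtype.val Subtype.val)) using 2 with s
  rw [gJ_eq_integral]
  congr with t
  congr 1
  simp only [submatrix_add, submatrix_smul, Pi.add_apply, Pi.smul_apply, add_mulVec, smul_mulVec,
    dotProduct_add, dotProduct_smul, smul_eq_mul]
  ring

theorem fderiv_fderiv_gJ {x : Matrix (Fin d) (Fin d) ℝ}
    (hx : (Matrix.of fun i j : {a // a ∈ J} => -x i.1 j.1).PosDef)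
    {i j : Fin d} (hi : i ∈ J) (hj : j ∈ J) (y : Fin d → ℝ) :
    fderiv ℝ (fun y' => fderiv ℝ (fun y'' => gJ d J x y'') y' (Pi.single j 1)) y
        (Pi.single i 1)
      = ∫ t : {a // a ∈ J} → ℝ in {t | ∀ j, 0 ≤ t j}, t ⟨i, hi⟩ * t ⟨j, hj⟩
          * exp (t ⬝ᵥ x.submatrix Subtype.val Subtype.val *ᵥ t + ∑ k, y k.1 * t k) := by
  obtain ⟨c, hc, hQ⟩ := exists_quadForm_submatrix_le_of_posDef hx
  have hφB : ∀ t : {a // a ∈ J} → ℝ, t ⬝ᵥ x.submatrix Subtype.val Subtype.val *ᵥ t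
      ≤ 0 * ∑ i, |t i| - c * ∑ i, t i ^ 2 := fun t => by linarith [hQ t]
  have hfirst : ∀ y', fderiv ℝ (fun y'' => gJ d J x y'') y' (Pi.single j 1)
      = ∫ t : {a // a ∈ J} → ℝ in {t | ∀ j, 0 ≤ t j}, t ⟨j, hj⟩
          * exp (t ⬝ᵥ x.submatrix Subtype.val Subtype.val *ᵥ t + ∑ k, y' k.1 * t k) := by
    intro y'
    have := fderiv_integral_mul_exp_add_sum_apply {t | ∀ j, 0 ≤ t j} Subtype.val
      (w := fun _ => 1) continuous_const (by fun_prop) hc (K := 0) (fun t => by simp) hφB y'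
      (Pi.single j 1)
    simpa only [gJ_eq_integral, one_mul, sum_single_val_mul hj] using this
  have hweight : ∀ t : {a // a ∈ J} → ℝ, |t ⟨j, hj⟩| ≤ exp (1 * ∑ i, |t i|) := fun t => by
    rw [one_mul]
    linarith [Finset.single_le_sum (fun i _ => abs_nonneg (t i)) (Finset.mem_univ ⟨j, hj⟩),
      add_one_le_exp (∑ i, |t i|)]
  simp only [hfirst]
  simpa only [sum_single_val_mul hi, mul_assoc] using
    fderiv_integral_mul_exp_add_sum_apply {t | ∀ j, 0 ≤ t j} Subtype.val
      (continuous_apply _) (by fun_prop) hc hweight hφB y (Pi.single i 1)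

end gJ

/-- For J ⊆ {1,…,d} with −x_J positive definite:
∂g_J/∂x_{ij} = 2 ∂²g_J/∂y_i∂y_j if {i,j} ⊆ J with i < j;
∂g_J/∂x_{ii} = ∂²g_J/∂y_i² if i ∈ J; and ∂g_J/∂x_{ij} = 0 if {i,j} ⊄ J.
(The partial derivative in the independent variable x_{ij}, i < j, is the derivative
along the symmetric perturbation E_{ij} + E_{ji}.) -/
theorem gJ_x_derivative (d : ℕ) (J : Finset (Fin d))
    (x : Matrix (Fin d) (Fin d) ℝ)
    (hx : (Matrix.of fun i j : {a // a ∈ J} => -x i.1 j.1).PosDef)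
    (y : Fin d → ℝ) :
    (∀ i j : Fin d, i ∈ J → j ∈ J → i < j →
      deriv (fun s : ℝ =>
          gJ d J (x + s • (Matrix.single i j (1:ℝ)
            + Matrix.single j i (1:ℝ))) y) 0
        = 2 * fderiv ℝ (fun y' =>
            fderiv ℝ (fun y'' => gJ d J x y'') y' (Pi.single j 1)) y
            (Pi.single i 1)) ∧
    (∀ i ∈ J,
      deriv (fun s : ℝ => gJ d J (x + s • Matrix.single i i (1:ℝ)) y) 0
        = fderiv ℝ (fun y' =>
            fderiv ℝ (fun y'' => gJ d J x y'') y' (Pi.single i 1)) y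
            (Pi.single i 1)) ∧
    (∀ i j : Fin d, ¬(i ∈ J ∧ j ∈ J) →
      deriv (fun s : ℝ =>
          gJ d J (x + s • (Matrix.single i j (1:ℝ)
            + Matrix.single j i (1:ℝ))) y) 0 = 0) := by
  refine ⟨fun i j hi hj _ => ?_, fun i hi => ?_, fun i j hij => ?_⟩
  · rw [(hasDerivAt_gJ_add_smul hx _ y).deriv, fderiv_fderiv_gJ hx hi hj, ← integral_const_mul]
    simp only [submatrix_add, Pi.add_apply, add_mulVec, dotProduct_add,
      dotProduct_submatrix_val_single_mulVec hi hj, dotProduct_submatrix_val_single_mulVec hj hi]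
    congr with t
    ring
  · simp only [(hasDerivAt_gJ_add_smul hx _ y).deriv, fderiv_fderiv_gJ hx hi hi,
      dotProduct_submatrix_val_single_mulVec hi hi, one_mul]
  · have hji : ¬(j ∈ J ∧ i ∈ J) := fun h => hij h.symm
    simp only [(hasDerivAt_gJ_add_smul hx _ y).deriv, submatrix_add, Pi.add_apply,
      submatrix_val_single_of_not_mem hij, submatrix_val_single_of_not_mem hji]
    simp
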